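/- arXiv:1708.04640 — 4 statements merged into one kernel-verified Lean document; each statement's English description precedes it below -/
import Mathlib

section
/- For every finite simple graph G = (V,E) and every integer r ≥ 1, the minimum size of a percolating set of edges in the r-bond bootstrap percolation process is at most r times the minimum size of a percolating set of vertices in the r-neighbour bootstrap percolation process; that is, m_e(G,r) ≤ r · m(G,r). -/
open Polynomial

/-- A set `S` of edges is closed under the `r`-bond bootstrap infection rule: whenever a
vertex `v` is incident to at least `r` edges in `S`, all edges incident to `v` are in `S`. -/
def BondClosed {V : Type*} (G : SimpleGraph V) (r : ℕ) (S : Set (Sym2 V)) : Prop :=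
  ∀ v : V, r ≤ {u | G.Adj v u ∧ s(v, u) ∈ S}.ncard → ∀ w : V, G.Adj v w → s(v, w) ∈ S

/-- `F` percolates in the `r`-bond bootstrap process on `G`: every set of edges containing `F`
that is closed under the infection rule contains all edges of `G`. -/
def BondPercolates {V : Type*} (G : SimpleGraph V) (r : ℕ) (F : Set (Sym2 V)) : Prop :=
  ∀ S : Set (Sym2 V), F ⊆ S → BondClosed G r S → G.edgeSet ⊆ S

/-- `mEdge G r` is the minimum size of a set of edges of `G` percolating in the `r`-bond
bootstrap process, i.e. `m_e(G,r)`. -/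
noncomputable def mEdge {V : Type*} (G : SimpleGraph V) (r : ℕ) : ℕ :=
  sInf {n | ∃ F : Finset (Sym2 V), ↑F ⊆ G.edgeSet ∧ BondPercolates G r ↑F ∧ F.card = n}

/-- A set `S` of vertices is closed under the `r`-neighbour bootstrap infection rule. -/
def NeighClosed {V : Type*} (G : SimpleGraph V) (r : ℕ) (S : Set V) : Prop :=
  ∀ v : V, r ≤ {u | G.Adj v u ∧ u ∈ S}.ncard → v ∈ S

/-- `A` percolates in the `r`-neighbour bootstrap process on `G`. -/
def NeighPercolates {V : Type*} (G : SimpleGraph V) (r : ℕ) (A : Set V) : Prop :=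
  ∀ S : Set V, A ⊆ S → NeighClosed G r S → ∀ v : V, v ∈ S

/-- `mVertex G r` is the minimum size of a percolating set of vertices for the `r`-neighbour
bootstrap process, i.e. `m(G,r)`. -/
noncomputable def mVertex {V : Type*} (G : SimpleGraph V) (r : ℕ) : ℕ :=
  sInf {n | ∃ A : Finset V, NeighPercolates G r ↑A ∧ A.card = n}

/-- `c` is a proper edge colouring of `G`: distinct edges sharing an endpoint get distinct
colours. -/
def ProperEdgeColouring {V : Type*} (G : SimpleGraph V) (c : Sym2 V → ℝ) : Prop :=
  ∀ e₁ ∈ G.edgeSet, ∀ e₂ ∈ G.edgeSet, e₁ ≠ e₂ → (∃ v : V, v ∈ e₁ ∧ v ∈ e₂) → c e₁ ≠ c e₂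

/-- The space `W^r_{G,c}` of functions on edges recognized by systems of polynomials of degree
at most `r - 1` (degree `< r`) attached to the vertices. Functions are represented as functions
on `Sym2 V` vanishing outside the edge set of `G`. -/
noncomputable def Wspace {V : Type*} (G : SimpleGraph V) (c : Sym2 V → ℝ) (r : ℕ) :
    Submodule ℝ (Sym2 V → ℝ) where
  carrier := {φ | (∀ e, e ∉ G.edgeSet → φ e = 0) ∧
    ∃ p : V → ℝ[X], (∀ v, (p v).degree < (r : WithBot ℕ)) ∧
      ∀ v w : V, G.Adj v w → (p v).eval (c s(v, w)) = φ s(v, w)}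
  zero_mem' := ⟨fun _ _ => rfl, fun _ => 0,
    fun _ => by simp [Polynomial.degree_zero], fun _ _ _ => by simp⟩
  add_mem' := by
    rintro φ ψ ⟨hφ0, p, hp, hpe⟩ ⟨hψ0, q, hq, hqe⟩
    exact ⟨fun e he => by simp [hφ0 e he, hψ0 e he], fun v => p v + q v,
      fun v => lt_of_le_of_lt (Polynomial.degree_add_le _ _) (max_lt (hp v) (hq v)),
      fun v w hvw => by simp [hpe v w hvw, hqe v w hvw]⟩
  smul_mem' := by
    rintro a φ ⟨hφ0, p, hp, hpe⟩
    exact ⟨fun e he => by simp [hφ0 e he], fun v => a • p v,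
      fun v => lt_of_le_of_lt (Polynomial.degree_smul_le _ _) (hp v),
      fun v w hvw => by simp [hpe v w hvw]⟩

/-! From a percolating vertex set `A`, infect up to `r` edges at each `a ∈ A` (all of
them if `deg a < r`). In any bond-closed `S` containing these edges, every `a ∈ A` is saturated
(all its edges lie in `S`), and the saturated vertices form a neighbour-closed set, since a vertex
with `r` saturated neighbours has `r` edges in `S`. Hence every vertex is saturated and `S`
contains every edge. -/

namespace SimpleGraph

variable {V : Type*} (G : SimpleGraph V)

def saturated (S : Set (Sym2 V)) : Set V :=
  {v | ∀ w, G.Adj v w → s(v, w) ∈ S}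

variable {G}

theorem edgeSet_subset_of_forall_mem_saturated {S : Set (Sym2 V)}
    (h : ∀ v, v ∈ G.saturated S) : G.edgeSet ⊆ S := by
  intro e he
  induction e using Sym2.ind with
  | _ v w => exact h v w (G.mem_edgeSet.mp he)

theorem neighClosed_saturated [G.LocallyFinite] {r : ℕ} {S : Set (Sym2 V)}
    (hS : BondClosed G r S) : NeighClosed G r (G.saturated S) := by
  intro v hv
  have hsub : {u | G.Adj v u ∧ u ∈ G.saturated S} ⊆ {u | G.Adj v u ∧ s(v, u) ∈ S} :=
    fun u ⟨hvu, hu⟩ => ⟨hvu, Sym2.eq_swap ▸ hu v hvu.symm⟩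
  have hfin : {u | G.Adj v u ∧ s(v, u) ∈ S}.Finite :=
    (G.neighborSet v).toFinite.subset fun _ hu => hu.1
  exact hS v (hv.trans (Set.ncard_le_ncard hsub hfin))

theorem exists_card_le_saturating [G.LocallyFinite] (r : ℕ) (a : V) :
    ∃ F : Finset (Sym2 V), F.card ≤ r ∧ ↑F ⊆ G.edgeSet ∧
      ∀ S : Set (Sym2 V), ↑F ⊆ S → BondClosed G r S → a ∈ G.saturated S := by
  classical
  obtain ⟨N, hN, hNcard⟩ := Finset.exists_subset_card_eq (min_le_right r (G.degree a))
  have hNadj : ∀ u ∈ N, G.Adj a u := fun u hu => (G.mem_neighborFinset a u).mp (hN hu)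
  refine ⟨N.image (s(a, ·)), Finset.card_image_le.trans (hNcard ▸ min_le_left _ _), ?_,
    fun S hNS hS => ?_⟩
  · intro e he
    obtain ⟨u, hu, rfl⟩ := Finset.mem_image.mp he
    exact hNadj u hu
  have hNS' : ∀ u ∈ N, s(a, u) ∈ S := fun u hu => hNS (Finset.mem_image_of_mem _ hu)
  by_cases hdeg : r ≤ G.degree a
  · have hfin : {u | G.Adj a u ∧ s(a, u) ∈ S}.Finite :=
      (G.neighborSet a).toFinite.subset fun _ hu => hu.1
    have hsub : (↑N : Set V) ⊆ {u | G.Adj a u ∧ s(a, u) ∈ S} :=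
      fun u hu => ⟨hNadj u hu, hNS' u hu⟩
    apply hS a
    calc r = (↑N : Set V).ncard := by rw [Set.ncard_coe_finset, hNcard, min_eq_left hdeg]
      _ ≤ _ := Set.ncard_le_ncard hsub hfin
  · have hNall : N = G.neighborFinset a :=
      Finset.eq_of_subset_of_card_le hN (by rw [hNcard, card_neighborFinset_eq_degree]; omega)
    intro w hw
    exact hNS' w (hNall ▸ (G.mem_neighborFinset a w).mpr hw)

theorem exists_bondPercolates_card_le_of_neighPercolates [G.LocallyFinite] {r : ℕ} {A : Finset V}
    (hA : NeighPercolates G r ↑A) :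
    ∃ F : Finset (Sym2 V), ↑F ⊆ G.edgeSet ∧ BondPercolates G r ↑F ∧ F.card ≤ r * A.card := by
  classical
  choose F hFcard hFedge hFsat using exists_card_le_saturating (G := G) r
  refine ⟨A.biUnion F, ?_, fun S hFS hS => ?_, ?_⟩
  · simpa only [Finset.coe_biUnion, Set.iUnion₂_subset_iff] using fun a _ => hFedge a
  · have hAsat : ↑A ⊆ G.saturated S := fun a ha =>
      hFsat a S ((Finset.coe_subset.mpr (Finset.subset_biUnion_of_mem F ha)).trans hFS) hS
    exact edgeSet_subset_of_forall_mem_saturated (hA _ hAsat (neighClosed_saturated hS))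
  · calc (A.biUnion F).card ≤ ∑ a ∈ A, (F a).card := Finset.card_biUnion_le
      _ ≤ ∑ _a ∈ A, r := Finset.sum_le_sum fun a _ => hFcard a
      _ = r * A.card := by rw [Finset.sum_const, smul_eq_mul, mul_comm]

end SimpleGraph

theorem stmt0_general {V : Type*} [Fintype V] (G : SimpleGraph V) (r : ℕ) :
    mEdge G r ≤ r * mVertex G r := by
  classical
  have hne : {n | ∃ A : Finset V, NeighPercolates G r ↑A ∧ A.card = n}.Nonempty :=
    ⟨_, Finset.univ, fun S hS _ v => hS (by simp), rfl⟩
  obtain ⟨A, hA, hAcard⟩ := Nat.sInf_mem hne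
  obtain ⟨F, hFedge, hF, hFcard⟩ :=
    SimpleGraph.exists_bondPercolates_card_le_of_neighPercolates hA
  calc mEdge G r ≤ F.card := Nat.sInf_le ⟨F, hFedge, hF, rfl⟩
    _ ≤ r * A.card := hFcard
    _ = r * mVertex G r := by rw [hAcard, mVertex]

/-- For a finite simple graph `G` and `r ≥ 1`, `m_e(G,r) ≤ r * m(G,r)`. -/
theorem stmt0 {V : Type*} [Fintype V] (G : SimpleGraph V) (r : ℕ) (hr : 1 ≤ r) :
    mEdge G r ≤ r * mVertex G r :=
  stmt0_general G r
end

section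
/- For every finite simple graph G = (V,E) and every integer r ≥ 0, m(G,r) ≤ m_e(G,r) + |{v ∈ V : deg_G(v) < r}|; that is, the minimum size of a percolating vertex set in the r-neighbour bootstrap process is at most the minimum size of a percolating edge set in the r-bond bootstrap process plus the number of vertices of degree less than r. -/
open Polynomial

/-!
Take a minimum percolating edge set `F`, and let `A` consist of one endpoint of each edge of `F`
together with all vertices of degree less than `r`. If `S ⊇ A` is closed under the
`r`-neighbour rule, then the edges meeting `S` contain `F` and are closed under the `r`-bond
rule, so every edge of `G` meets `S`. A vertex of degree at least `r` outside `S` would then have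
all its neighbours in `S` and be infected, so `S` is everything.
-/

section

variable {V : Type*} {G : SimpleGraph V} {r : ℕ}

def edgesMeeting (S : Set V) : Set (Sym2 V) := {e | ∃ x ∈ e, x ∈ S}

lemma edgesMeeting_mono {S T : Set V} (h : S ⊆ T) : edgesMeeting S ⊆ edgesMeeting T :=
  fun _ ⟨x, hx, hxS⟩ => ⟨x, hx, h hxS⟩

lemma mem_of_mem_edgesMeeting {S : Set V} {v u : V} (h : s(v, u) ∈ edgesMeeting S)
    (hv : v ∉ S) : u ∈ S := by
  obtain ⟨x, hx, hxS⟩ := h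
  rcases Sym2.mem_iff.mp hx with rfl | rfl
  · exact absurd hxS hv
  · exact hxS

variable [G.LocallyFinite]

lemma NeighClosed.mem_of_le_ncard {S T : Set V} {v : V} (hS : NeighClosed G r S)
    (hr : r ≤ T.ncard) (hT : T ⊆ {u | G.Adj v u ∧ u ∈ S}) : v ∈ S :=
  hS v <| hr.trans <| Set.ncard_le_ncard hT <|
    (G.neighborSet v).toFinite.subset fun _ hu => hu.1

lemma NeighClosed.bondClosed_edgesMeeting {S : Set V} (hS : NeighClosed G r S) :
    BondClosed G r (edgesMeeting S) := by
  intro v hv w _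
  by_cases hvS : v ∈ S
  · exact ⟨v, Sym2.mem_mk_left v w, hvS⟩
  · exact absurd (hS.mem_of_le_ncard hv
      fun u ⟨hu, hvu⟩ => ⟨hu, mem_of_mem_edgesMeeting hvu hvS⟩) hvS

lemma NeighClosed.mem_of_edgeSet_subset {S : Set V} (hS : NeighClosed G r S)
    (hE : G.edgeSet ⊆ edgesMeeting S) {v : V} (hv : r ≤ (G.neighborSet v).ncard) : v ∈ S := by
  by_contra hvS
  exact hvS (hS.mem_of_le_ncard hv
    fun u hu => ⟨hu, mem_of_mem_edgesMeeting (hE (G.mem_edgeSet.mpr hu)) hvS⟩)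

lemma neighPercolates_of_bondPercolates {F : Set (Sym2 V)} {A : Set V}
    (hF : BondPercolates G r F) (hFA : F ⊆ edgesMeeting A)
    (hlow : ∀ v, (G.neighborSet v).ncard < r → v ∈ A) : NeighPercolates G r A := by
  intro S hAS hS v
  have hE : G.edgeSet ⊆ edgesMeeting S :=
    hF _ (hFA.trans (edgesMeeting_mono hAS)) hS.bondClosed_edgesMeeting
  rcases lt_or_ge (G.neighborSet v).ncard r with hv | hv
  · exact hAS (hlow v hv)
  · exact hS.mem_of_edgeSet_subset hE hv

end

lemma Finset.exists_card_le_subset_edgesMeeting {V : Type*} [DecidableEq V]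
    (F : Finset (Sym2 V)) : ∃ B : Finset V, B.card ≤ F.card ∧ ↑F ⊆ edgesMeeting (B : Set V) :=
  ⟨F.image fun e => e.out.1, Finset.card_image_le,
    fun e he => ⟨e.out.1, Sym2.out_fst_mem e, Finset.mem_image_of_mem _ he⟩⟩

lemma exists_bondPercolates_card_eq_mEdge {V : Type*} [Finite V] (G : SimpleGraph V) (r : ℕ) :
    ∃ F : Finset (Sym2 V), ↑F ⊆ G.edgeSet ∧ BondPercolates G r ↑F ∧ F.card = mEdge G r := by
  refine Nat.sInf_mem (s := {n | ∃ F : Finset (Sym2 V), ↑F ⊆ G.edgeSet ∧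
    BondPercolates G r ↑F ∧ F.card = n}) ?_
  exact ⟨_, G.edgeSet.toFinite.toFinset, by simp, fun _ hE _ => by simpa using hE, rfl⟩

/-- For a finite simple graph `G` and `r ≥ 0`,
`m(G,r) ≤ m_e(G,r) + #{v : deg v < r}`. -/
theorem stmt1 {V : Type*} [Fintype V] (G : SimpleGraph V) (r : ℕ) :
    mVertex G r ≤ mEdge G r + {v : V | (G.neighborSet v).ncard < r}.ncard := by
  classical
  set L : Set V := {v : V | (G.neighborSet v).ncard < r}
  obtain ⟨F, -, hF, hFcard⟩ := exists_bondPercolates_card_eq_mEdge G r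
  obtain ⟨B, hBcard, hFB⟩ := F.exists_card_le_subset_edgesMeeting
  have hperc : NeighPercolates G r ↑(B ∪ L.toFinset) :=
    neighPercolates_of_bondPercolates hF
      (hFB.trans (edgesMeeting_mono (by simp))) (fun v hv => by simp [L, hv])
  calc mVertex G r ≤ (B ∪ L.toFinset).card := Nat.sInf_le ⟨_, hperc, rfl⟩
    _ ≤ B.card + L.toFinset.card := Finset.card_union_le _ _
    _ ≤ mEdge G r + L.ncard := by rw [Set.ncard_eq_toFinset_card']; omega
end

section
/- Let G = (V,E) be a finite simple graph, r ≥ 0 an integer, c : E → ℝ a proper edge colouring of G, and let F ⊆ E be a percolating set for the r-bond bootstrap percolation process on G. If φ ∈ W^r_{G,c} satisfies φ(e) = 0 for every e ∈ F, then φ is identically zero on E. -/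
open Polynomial

/- The zero set of `φ ∈ W^r_{G,c}` is closed under the infection rule: if `r` edges at `v` lie in
it, the polynomial `p v`, of degree `< r`, vanishes at their `r` colours, which are distinct since
`c` is proper; hence `p v = 0` and `φ` vanishes on every edge at `v`. Percolation of `F` then
spreads the zero set over all of `E`. -/

theorem Polynomial.eq_zero_of_degree_lt_ncard_of_eval_eq_zero {R : Type*} [CommRing R]
    [IsDomain R] {p : R[X]} {s : Set R} (hdeg : p.degree < s.ncard)
    (heval : ∀ x ∈ s, p.eval x = 0) : p = 0 := by
  by_contra hp
  rw [degree_eq_natDegree hp, Nat.cast_lt] at hdeg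
  have hs : s.Finite := Set.finite_of_ncard_pos (Nat.zero_lt_of_lt hdeg)
  refine hp (eq_zero_of_natDegree_lt_card_of_eval_eq_zero' p hs.toFinset (by simpa using heval) ?_)
  rwa [← Set.ncard_eq_toFinset_card _ hs]

section ProperEdgeColouring

variable {V : Type*} {G : SimpleGraph V} {c : Sym2 V → ℝ}

theorem ProperEdgeColouring.injOn_neighborSet (hc : ProperEdgeColouring G c) (v : V) :
    Set.InjOn (fun u => c s(v, u)) (G.neighborSet v) := by
  intro u₁ h₁ u₂ h₂ hcol
  by_contra hne
  have hedge : s(v, u₁) ≠ s(v, u₂) := by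
    rw [Ne, Sym2.eq_iff]
    rintro (⟨-, h⟩ | ⟨rfl, rfl⟩)
    · exact hne h
    · exact G.irrefl h₁
  exact hc _ h₁ _ h₂ hedge ⟨v, Sym2.mem_mk_left _ _, Sym2.mem_mk_left _ _⟩ hcol

theorem ProperEdgeColouring.eq_zero_of_eval_eq_zero (hc : ProperEdgeColouring G c) {v : V}
    {q : ℝ[X]} {U : Set V} (hU : U ⊆ G.neighborSet v) (hdeg : q.degree < U.ncard)
    (heval : ∀ u ∈ U, q.eval (c s(v, u)) = 0) : q = 0 := by
  refine eq_zero_of_degree_lt_ncard_of_eval_eq_zero (s := (fun u => c s(v, u)) '' U) ?_ ?_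
  · rwa [((hc.injOn_neighborSet v).mono hU).ncard_image]
  · rintro _ ⟨u, hu, rfl⟩
    exact heval u hu

theorem ProperEdgeColouring.bondClosed_zeroSet (hc : ProperEdgeColouring G c) {r : ℕ}
    {φ : Sym2 V → ℝ} (hφ : φ ∈ Wspace G c r) : BondClosed G r {e | φ e = 0} := by
  obtain ⟨-, p, hp, hpφ⟩ := hφ
  intro v hv w hvw
  have hpv : p v = 0 :=
    hc.eq_zero_of_eval_eq_zero (U := {u | G.Adj v u ∧ s(v, u) ∈ {e | φ e = 0}})
      (fun _ hu => hu.1) ((hp v).trans_le (Nat.cast_le.mpr hv))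
      (fun u hu => (hpφ v u hu.1).trans hu.2)
  simpa [hpv] using (hpφ v w hvw).symm

end ProperEdgeColouring

theorem stmt3_general {V : Type*} (G : SimpleGraph V) (r : ℕ) (c : Sym2 V → ℝ)
    (hc : ProperEdgeColouring G c) (F : Set (Sym2 V))
    (hperc : BondPercolates G r F) (φ : Sym2 V → ℝ) (hφ : φ ∈ Wspace G c r)
    (hzero : ∀ e ∈ F, φ e = 0) :
    ∀ e ∈ G.edgeSet, φ e = 0 :=
  hperc _ hzero (hc.bondClosed_zeroSet hφ)

/-- If `F` percolates in the `r`-bond bootstrap process on `G` and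
`φ ∈ W^r_{G,c}` vanishes on `F`, then `φ` vanishes on every edge of `G`. -/
theorem stmt3 {V : Type*} [Fintype V] (G : SimpleGraph V) (r : ℕ) (c : Sym2 V → ℝ)
    (hc : ProperEdgeColouring G c) (F : Set (Sym2 V)) (hF : F ⊆ G.edgeSet)
    (hperc : BondPercolates G r F) (φ : Sym2 V → ℝ) (hφ : φ ∈ Wspace G c r)
    (hzero : ∀ e ∈ F, φ e = 0) :
    ∀ e ∈ G.edgeSet, φ e = 0 :=
  stmt3_general G r c hc F hperc φ hφ hzero
end

section
/- Let d ≥ r ≥ 1 be integers. Define F_r(Q_d) to be the set of edges of Q_d of the form {x, δ_j x} with j ∈ {1,…,d} and x_1 + x_2 + … + x_{j−1} ≥ d − r, where δ_j x denotes the vector obtained from x by flipping its j-th coordinate (note the condition does not involve x_j, so it is well-defined on the unordered edge). Then F_r(Q_d) is a percolating set for the r-bond bootstrap percolation process on Q_d. -/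
open Polynomial

/-- The `d`-dimensional hypercube `Q_d`: vertices are vectors in `{0,1}^d` and two vertices are
adjacent iff they differ in exactly one coordinate. -/
def hypercube (d : ℕ) : SimpleGraph (Fin d → Bool) where
  Adj x y := ∃! i : Fin d, x i ≠ y i
  symm := by
    constructor
    rintro x y ⟨i, hi, hu⟩
    exact ⟨i, hi.symm, fun j hj => hu j hj.symm⟩
  loopless := by
    constructor
    rintro x ⟨i, hi, -⟩
    exact hi rfl

/-- The set `F_r(Q_d)` of edges `{x, δ_j x}` of the hypercube (where `δ_j x` flips the `j`-th
coordinate of `x`) such that the number of coordinates `i < j` with `x i = true` is at least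
`d - r`. (Coordinates are indexed `0, …, d-1`, corresponding to the paper's `1, …, d`; the
condition does not involve coordinate `j`, so it is well defined on the unordered edge.) -/
def hcubeF (d r : ℕ) : Set (Sym2 (Fin d → Bool)) :=
  {e | ∃ (x : Fin d → Bool) (j : Fin d),
    e = s(x, Function.update x j (!x j)) ∧
      d - r ≤ (Finset.univ.filter (fun i : Fin d => i < j ∧ x i = true)).card}

/-! Induct on the number of `false` coordinates of a vertex `x`. The edge of `x` in direction `j`
is infected if `x j = false`, since then its other endpoint has fewer `false` coordinates and
all its edges are infected, and also if it lies in `F_r(Q_d)`. Along the remaining directions,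
those with `x j = true` and fewer than `d - r` earlier `true` coordinates, the number of earlier
`true` coordinates strictly increases, so there are at most `d - r` of them. Hence `x` has at
least `r` infected edges, and all its edges become infected. -/

open Finset

theorem BondClosed.adj_mem {V ι : Type*} [Finite V] {G : SimpleGraph V} {r : ℕ}
    {S : Set (Sym2 V)} (hS : BondClosed G r S) {v : V} {T : Finset ι} (f : ι → V)
    (hf : Set.InjOn f T) (hT : r ≤ #T) (hfT : ∀ i ∈ T, G.Adj v (f i) ∧ s(v, f i) ∈ S)
    {w : V} (hw : G.Adj v w) : s(v, w) ∈ S := by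
  refine hS v ?_ w hw
  calc r ≤ #T := hT
    _ = (T : Set ι).ncard := (Set.ncard_coe_finset T).symm
    _ ≤ _ := Set.ncard_le_ncard_of_injOn f hfT hf

section Flip

variable {ι : Type*} [DecidableEq ι]

def flipAt (x : ι → Bool) (j : ι) : ι → Bool :=
  Function.update x j (!x j)

@[simp]
theorem flipAt_self (x : ι → Bool) (j : ι) : flipAt x j j = !x j :=
  Function.update_self j _ x

theorem flipAt_of_ne (x : ι → Bool) {i j : ι} (h : i ≠ j) : flipAt x j i = x i :=
  Function.update_of_ne h _ x

@[simp]
theorem flipAt_flipAt (x : ι → Bool) (j : ι) : flipAt (flipAt x j) j = x := by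
  simp [flipAt]

theorem flipAt_injective (x : ι → Bool) : Function.Injective (flipAt x) := by
  intro j₁ j₂ h
  by_contra hne
  have h₁ := congrFun h j₁
  rw [flipAt_self, flipAt_of_ne x hne] at h₁
  exact Bool.not_ne_self (x j₁) h₁

theorem card_false_flipAt_lt [Fintype ι] {x : ι → Bool} {j : ι} (hx : x j = false) :
    #{i | flipAt x j i = false} < #{i | x i = false} := by
  refine card_lt_card ⟨fun i hi => ?_, fun hsub => ?_⟩
  · rw [mem_filter] at hi ⊢
    obtain rfl | hij := eq_or_ne i j
    · simp [hx] at hi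
    · exact ⟨mem_univ i, flipAt_of_ne x hij ▸ hi.2⟩
  · simpa [hx] using hsub (mem_filter.2 ⟨mem_univ j, hx⟩)

end Flip

theorem hypercube_adj_flipAt {d : ℕ} (x : Fin d → Bool) (j : Fin d) :
    (hypercube d).Adj x (flipAt x j) :=
  ⟨j, by simp, fun i hi => by_contra fun hij => hi (flipAt_of_ne x hij).symm⟩

section NumTrueBelow

variable {ι : Type*} [Fintype ι] [LinearOrder ι]

def numTrueBelow (x : ι → Bool) (j : ι) : ℕ :=
  #{i | i < j ∧ x i = true}

theorem strictMonoOn_numTrueBelow (x : ι → Bool) :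
    StrictMonoOn (numTrueBelow x) {j | x j = true} := by
  intro j₁ hj₁ j₂ _ h
  refine card_lt_card ⟨fun i hi => ?_, fun hsub => ?_⟩
  · simp only [mem_filter, mem_univ, true_and] at hi ⊢
    exact ⟨hi.1.trans h, hi.2⟩
  · exact absurd (hsub (mem_filter.2 ⟨mem_univ _, h, hj₁⟩)) (by simp)

theorem card_filter_numTrueBelow_lt_le (x : ι → Bool) (m : ℕ) :
    #{j | x j = true ∧ numTrueBelow x j < m} ≤ m := by
  simpa using card_le_card_of_injOn (t := range m) (numTrueBelow x)
    (fun j hj => by simpa using (mem_filter.1 hj).2.2)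
    ((strictMonoOn_numTrueBelow x).injOn.mono fun j hj => (mem_filter.1 hj).2.1)

theorem le_card_false_or_le_numTrueBelow {d r : ℕ} (hd : r ≤ d) (x : Fin d → Bool) :
    r ≤ #{j | x j = false ∨ d - r ≤ numTrueBelow x j} := by
  have hsplit := card_filter_add_card_filter_not
    (s := univ) (fun j : Fin d => x j = false ∨ d - r ≤ numTrueBelow x j)
  have hbad : #{j | ¬(x j = false ∨ d - r ≤ numTrueBelow x j)} ≤ d - r := by
    convert card_filter_numTrueBelow_lt_le x (d - r) using 3
    simp only [not_or, Bool.not_eq_false, not_le]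
  rw [card_univ, Fintype.card_fin] at hsplit
  omega

end NumTrueBelow

theorem hypercube_edge_mem_of_bondClosed {d r : ℕ} (hd : r ≤ d) {S : Set (Sym2 (Fin d → Bool))}
    (hFS : hcubeF d r ⊆ S) (hS : BondClosed (hypercube d) r S) {x w : Fin d → Bool}
    (hw : (hypercube d).Adj x w) : s(x, w) ∈ S := by
  induction hn : #{i | x i = false} using Nat.strong_induction_on generalizing x w with
  | _ n ih =>
  refine BondClosed.adj_mem hS (flipAt x) (flipAt_injective x).injOn
    (le_card_false_or_le_numTrueBelow hd x)
    (fun j hj => ⟨hypercube_adj_flipAt x j, ?_⟩) hw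
  rcases (mem_filter.1 hj).2 with hxj | hcount
  · have hback : (hypercube d).Adj (flipAt x j) x := by
      simpa using hypercube_adj_flipAt (flipAt x j) j
    exact Sym2.eq_swap ▸ ih _ (hn ▸ card_false_flipAt_lt hxj) hback rfl
  · exact hFS ⟨x, j, rfl, hcount⟩

theorem stmt13_general (d r : ℕ) (hd : r ≤ d) :
    BondPercolates (hypercube d) r (hcubeF d r) := by
  intro S hFS hS e he
  induction e using Sym2.ind with
  | _ x w => exact hypercube_edge_mem_of_bondClosed hd hFS hS he

/-- For `d ≥ r ≥ 1`, the set `F_r(Q_d)` percolates in the `r`-bond bootstrap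
process on `Q_d`. -/
theorem stmt13 (d r : ℕ) (hr : 1 ≤ r) (hd : r ≤ d) :
    BondPercolates (hypercube d) r (hcubeF d r) :=
  stmt13_general d r hd
end
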